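/- arXiv:2008.11477 — 7 statements merged into one kernel-verified Lean document; each statement's English description precedes it below -/
import Mathlib

section
/- Direction of the Bellman update (Theorem 1, Part 2a): Let m ≥ 1, let I be a symmetric positive definite m×m real matrix, let a ∈ ℝᵐ, and let f : ℝᵐ → ℝ be concave and continuously differentiable on ℝᵐ. Let x* be the (unique) maximizer of V(x) = f(x) − (1/2)(x−a)ᵀI(x−a) over ℝᵐ. Then ⟨x* − a, ∇f(a)⟩ ≥ 0, where ∇f denotes the gradient of f and ⟨·,·⟩ the Euclidean inner product. -/
open Matrix RealInnerProductSpace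

/-- **Direction of the Bellman update** (Theorem 1, Part 2a): if `f` is concave and
continuously differentiable and `xs` maximizes `V x = f x - (1/2)(x-a)ᵀ I (x-a)`,
then `⟨xs - a, ∇f(a)⟩ ≥ 0`. -/
theorem bellman_update_direction
    (m : ℕ) (hm : 1 ≤ m)
    (I : Matrix (Fin m) (Fin m) ℝ) (hI : I.PosDef)
    (a : EuclideanSpace ℝ (Fin m))
    (f : EuclideanSpace ℝ (Fin m) → ℝ)
    (hconc : ConcaveOn ℝ Set.univ f) (hdiff : ContDiff ℝ 1 f)
    (xs : EuclideanSpace ℝ (Fin m))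
    (hxs : ∀ x : EuclideanSpace ℝ (Fin m),
      f x - (1/2) * ⟪x - a, Matrix.toEuclideanLin I (x - a)⟫
        ≤ f xs - (1/2) * ⟪xs - a, Matrix.toEuclideanLin I (xs - a)⟫) :
    0 ≤ ⟪xs - a, gradient f a⟫ := by
  set v : EuclideanSpace ℝ (Fin m) := xs - a with hv
  -- quadratic form is nonneg
  have hq : 0 ≤ ⟪v, Matrix.toEuclideanLin I v⟫ := by
    have := hI.posSemidef.re_dotProduct_nonneg (WithLp.equiv 2 (Fin m → ℝ) v)
    simp [EuclideanSpace.inner_eq_star_dotProduct, Matrix.toEuclideanLin_apply] at this ⊢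
    rwa [dotProduct_comm]
  -- f a ≤ f xs
  have hfa : f a ≤ f xs := by
    have h := hxs a
    simp only [sub_self] at h
    simp only [map_zero, inner_zero_right, mul_zero, sub_zero] at h
    linarith [mul_nonneg (by norm_num : (0:ℝ) ≤ 1/2) hq]
  -- 1D restriction
  set g : ℝ → ℝ := fun t => f (a + t • v) with hg
  have hgline : ∀ t : ℝ, a + t • v = (AffineMap.lineMap a xs : ℝ →ᵃ[ℝ] _) t := by
    intro t
    simp [AffineMap.lineMap_apply, hv]
    abel
  have hgconc : ConcaveOn ℝ Set.univ g := by
    have := hconc.comp_affineMap (AffineMap.lineMap a xs : ℝ →ᵃ[ℝ] _)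
    have hpre : (AffineMap.lineMap a xs : ℝ →ᵃ[ℝ] _) ⁻¹' Set.univ = Set.univ := by
      simp
    rw [hpre] at this
    suffices hgeq : g = f ∘ (AffineMap.lineMap a xs : ℝ →ᵃ[ℝ] _) by rw [hgeq]; exact this
    funext t
    simp [hg, Function.comp, hgline t]
  have hfd : HasFDerivAt f (fderiv ℝ f a) a :=
    (hdiff.differentiable one_ne_zero a).hasFDerivAt
  have hL : HasDerivAt (fun t : ℝ => a + t • v) v 0 := by
    simpa using ((hasDerivAt_id (0:ℝ)).smul_const v).const_add a
  have hg0 : HasDerivAt g (fderiv ℝ f a v) 0 := by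
    have h0 : a + (0:ℝ) • v = a := by simp
    have := (h0 ▸ hfd).comp_hasDerivAt 0 hL
    rw [h0] at this
    exact this
  have hslope : slope g 0 1 ≤ fderiv ℝ f a v :=
    hgconc.slope_le_of_hasDerivAt (Set.mem_univ 0) (Set.mem_univ 1) one_pos hg0
  have hslope' : slope g 0 1 = f xs - f a := by
    have h1 : g 1 = f xs := by simp [hg, hv]
    have h0 : g 0 = f a := by simp [hg]
    simp [slope_def_field, h1, h0]
  have hkey : 0 ≤ fderiv ℝ f a v := by
    rw [hslope'] at hslope
    linarith
  -- fderiv = inner with gradient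
  have hgrad : fderiv ℝ f a v = ⟪gradient f a, v⟫ := by
    have hG : HasGradientAt f (gradient f a) a :=
      (hdiff.differentiable one_ne_zero a).hasGradientAt
    have hF := hasGradientAt_iff_hasFDerivAt.mp hG
    have : fderiv ℝ f a = (InnerProductSpace.toDual ℝ _ (gradient f a) : _) :=
      hfd.unique hF
    rw [this]
    simp [InnerProductSpace.toDual_apply_apply]
  rw [real_inner_comm]
  rw [← hgrad]
  exact hkey
end

section
/- Implicit step length does not exceed explicit step length (Theorem 1, Part 2b): Let m ≥ 1, let I be a symmetric positive definite m×m real matrix, let a ∈ ℝᵐ, and let f : ℝᵐ → ℝ be concave and continuously differentiable on ℝᵐ. Let x* be the (unique) maximizer of V(x) = f(x) − (1/2)(x−a)ᵀI(x−a) over ℝᵐ, and define the explicit update x_e := a + I⁻¹∇f(a). Then (x* − a)ᵀI(x* − a) ≤ (x_e − a)ᵀI(x_e − a). -/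
set_option maxHeartbeats 800000

open Matrix RealInnerProductSpace

/-- **Implicit step length does not exceed explicit step length** (Theorem 1, Part 2b):
if `f` is concave and continuously differentiable, `xs` maximizes
`V x = f x - (1/2)(x-a)ᵀ I (x-a)`, and `xe = a + I⁻¹ ∇f(a)` is the explicit update,
then `(xs-a)ᵀ I (xs-a) ≤ (xe-a)ᵀ I (xe-a)`. -/
theorem bellman_implicit_le_explicit_step
    (m : ℕ) (hm : 1 ≤ m)
    (I : Matrix (Fin m) (Fin m) ℝ) (hI : I.PosDef)
    (a : EuclideanSpace ℝ (Fin m))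
    (f : EuclideanSpace ℝ (Fin m) → ℝ)
    (hconc : ConcaveOn ℝ Set.univ f) (hdiff : ContDiff ℝ 1 f)
    (xs : EuclideanSpace ℝ (Fin m))
    (hxs : ∀ x : EuclideanSpace ℝ (Fin m),
      f x - (1/2) * ⟪x - a, Matrix.toEuclideanLin I (x - a)⟫
        ≤ f xs - (1/2) * ⟪xs - a, Matrix.toEuclideanLin I (xs - a)⟫)
    (xe : EuclideanSpace ℝ (Fin m))
    (hxe : xe = a + Matrix.toEuclideanLin I⁻¹ (gradient f a)) :
    ⟪xs - a, Matrix.toEuclideanLin I (xs - a)⟫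
      ≤ ⟪xe - a, Matrix.toEuclideanLin I (xe - a)⟫ := by
  set L := Matrix.toEuclideanLin I with hLdef
  set g := gradient f a with hgdef
  set u : EuclideanSpace ℝ (Fin m) := xs - a with hudef
  set v : EuclideanSpace ℝ (Fin m) := Matrix.toEuclideanLin I⁻¹ g with hvdef
  have hxeav : xe - a = v := by rw [hxe]; abel
  rw [hxeav]
  -- symmetry
  have hsym : ∀ x y : EuclideanSpace ℝ (Fin m), ⟪L x, y⟫ = ⟪x, L y⟫ :=
    Matrix.isHermitian_iff_isSymmetric.mp hI.1
  -- nonnegativity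
  have hnn : ∀ w : EuclideanSpace ℝ (Fin m), 0 ≤ ⟪w, L w⟫ := by
    intro w
    have h := (Matrix.posSemidef_iff_dotProduct_mulVec.mp hI.posSemidef).2 ((WithLp.equiv 2 (Fin m → ℝ)) w)
    simpa [hLdef, Matrix.toEuclideanLin_apply, PiLp.inner_apply, RCLike.inner_apply,
      dotProduct, mul_comm] using h
  -- L v = g
  have hIinv : I * I⁻¹ = 1 := Matrix.mul_nonsing_inv I (isUnit_iff_ne_zero.mpr hI.det_pos.ne')
  have hLv : L v = g := by
    rw [hLdef, hvdef, Matrix.toEuclideanLin_apply, Matrix.toEuclideanLin_apply]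
    simp [Matrix.mulVec_mulVec, hIinv]
  set Q : ℝ := ⟪u, L u⟫ with hQdef
  set P : ℝ := ⟪v, L v⟫ with hPdef
  set R : ℝ := ⟪v, L u⟫ with hRdef
  -- step 1: key inequality for t < 1
  have key : ∀ t : ℝ, t ∈ Set.Ico (0:ℝ) 1 → (1+t)/2 * Q ≤ f xs - f a := by
    intro t ht
    have hc := hconc.2 (Set.mem_univ a) (Set.mem_univ xs)
      (by linarith [ht.2] : (0:ℝ) ≤ 1 - t) ht.1 (by ring)
    have hpt : (1-t) • a + t • xs = a + t • u := by
      rw [hudef]; module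
    rw [hpt] at hc
    have hopt := hxs (a + t • u)
    have hsub : (a + t • u) - a = t • u := by abel
    rw [hsub] at hopt
    have hq : ⟪t • u, L (t • u)⟫ = t^2 * Q := by
      rw [LinearMap.map_smul, real_inner_smul_left, real_inner_smul_right, hQdef]; ring
    rw [hq] at hopt
    simp only [smul_eq_mul] at hc
    have H : (1-t) * ((1+t)/2 * Q) ≤ (1-t) * (f xs - f a) := by nlinarith
    exact (mul_le_mul_iff_right₀ (by linarith [ht.2] : (0:ℝ) < 1 - t)).mp H
  have hQle : Q ≤ f xs - f a := by
    have htend : Filter.Tendsto (fun t : ℝ => (1+t)/2 * Q) (nhdsWithin 1 (Set.Iio 1)) (nhds Q) := by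
      have hcont : Continuous (fun t : ℝ => (1+t)/2 * Q) := (((continuous_const.add continuous_id).div_const 2).mul continuous_const)
      have := (hcont.tendsto 1).mono_left (nhdsWithin_le_nhds (s := Set.Iio (1:ℝ)))
      simpa using this
    refine le_of_tendsto htend ?_
    filter_upwards [Ico_mem_nhdsLT_of_mem (by constructor <;> norm_num : (1:ℝ) ∈ Set.Ioc 0 1)]
      with t ht using key t ht
  -- step 2: gradient inequality
  have hga : HasGradientAt f g a := (hdiff.differentiable one_ne_zero a).hasGradientAt
  have hline : HasDerivAt (fun t : ℝ => a + t • u) u 0 := by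
    simpa using ((hasDerivAt_id (0:ℝ)).smul_const u).const_add a
  have hder : HasDerivAt (fun t : ℝ => f (a + t • u)) ⟪g, u⟫ 0 := by
    have hfd : HasFDerivAt f (InnerProductSpace.toDual ℝ _ g) ((fun t : ℝ => a + t • u) 0) := by
      simpa using hga.hasFDerivAt
    have := hfd.comp_hasDerivAt 0 hline; simp at this; exact this
  have hgrad : f xs - f a ≤ ⟪g, u⟫ := by
    have hslope := hasDerivAt_iff_tendsto_slope.mp hder
    have hslope' := hslope.mono_left (nhdsWithin_mono 0
      (by intro x hx; exact Set.mem_compl_singleton_iff.mpr (ne_of_gt hx) : Set.Ioi (0:ℝ) ⊆ {(0:ℝ)}ᶜ))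
    refine ge_of_tendsto hslope' ?_
    filter_upwards [Ioc_mem_nhdsGT_of_mem (by constructor <;> norm_num : (0:ℝ) ∈ Set.Ico 0 1)]
      with t ht
    have hc := hconc.2 (Set.mem_univ a) (Set.mem_univ xs)
      (by linarith [ht.2] : (0:ℝ) ≤ 1 - t) ht.1.le (by ring)
    have hpt : (1-t) • a + t • xs = a + t • u := by rw [hudef]; module
    rw [hpt] at hc
    simp only [smul_eq_mul] at hc
    rw [slope_def_field]
    simp only [zero_smul, add_zero, sub_zero]
    rw [le_div_iff₀ ht.1]
    nlinarith
  -- R relation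
  have hRQ : Q ≤ R := by
    have : ⟪g, u⟫ = R := by rw [← hLv, hsym, hRdef]
    linarith [hQle, hgrad, this.symm.le]
  -- Cauchy-Schwarz via expansion
  have hexp : 0 ≤ Q^2 * P - Q * R^2 := by
    have h0 := hnn (Q • v - R • u)
    have huv : ⟪u, L v⟫ = R := by rw [← hsym, real_inner_comm, hRdef]
    simp only [LinearMap.map_sub, LinearMap.map_smul, inner_sub_left, inner_sub_right,
      real_inner_smul_left, real_inner_smul_right] at h0
    rw [← hPdef, ← hQdef, ← hRdef, huv] at h0
    nlinarith [h0]
  have hQ0 : 0 ≤ Q := hnn u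
  have hP0 : 0 ≤ P := hnn v
  show Q ≤ P
  rcases eq_or_lt_of_le hQ0 with hQz | hQpos
  · linarith
  · have hR2 : Q*Q ≤ R*R := mul_le_mul hRQ hRQ hQ0 (hQ0.trans hRQ)
    nlinarith [hexp, hR2, mul_pos hQpos hQpos, hQpos]
end

section
/- Accuracy of the Bellman update relative to the prediction (Theorem 1, Part 2c): Let m ≥ 1, let I be a symmetric positive definite m×m real matrix, let a ∈ ℝᵐ, and let f : ℝᵐ → ℝ be concave and continuously differentiable on ℝᵐ. Let x* be the (unique) maximizer of V(x) = f(x) − (1/2)(x−a)ᵀI(x−a) over ℝᵐ. Then for every α ∈ ℝᵐ, (x* − α)ᵀI(x* − α) ≤ (a − α)ᵀI(a − α) + 2( f(x*) − f(α) ). -/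
open Matrix RealInnerProductSpace

/-- **Accuracy of the Bellman update relative to the prediction** (Theorem 1, Part 2c):
if `f` is concave and continuously differentiable and `xs` maximizes
`V x = f x - (1/2)(x-a)ᵀ I (x-a)`, then for every `α`,
`(xs-α)ᵀ I (xs-α) ≤ (a-α)ᵀ I (a-α) + 2 (f xs - f α)`. -/
theorem bellman_update_accuracy
    (m : ℕ) (hm : 1 ≤ m)
    (I : Matrix (Fin m) (Fin m) ℝ) (hI : I.PosDef)
    (a : EuclideanSpace ℝ (Fin m))
    (f : EuclideanSpace ℝ (Fin m) → ℝ)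
    (hconc : ConcaveOn ℝ Set.univ f) (hdiff : ContDiff ℝ 1 f)
    (xs : EuclideanSpace ℝ (Fin m))
    (hxs : ∀ x : EuclideanSpace ℝ (Fin m),
      f x - (1/2) * ⟪x - a, Matrix.toEuclideanLin I (x - a)⟫
        ≤ f xs - (1/2) * ⟪xs - a, Matrix.toEuclideanLin I (xs - a)⟫) :
    ∀ α : EuclideanSpace ℝ (Fin m),
      ⟪xs - α, Matrix.toEuclideanLin I (xs - α)⟫
        ≤ ⟪a - α, Matrix.toEuclideanLin I (a - α)⟫ + 2 * (f xs - f α) := by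
  intro α
  set L : EuclideanSpace ℝ (Fin m) →ₗ[ℝ] EuclideanSpace ℝ (Fin m) :=
    Matrix.toEuclideanLin I with hL
  have hsym : ∀ u v : EuclideanSpace ℝ (Fin m), ⟪u, L v⟫ = ⟪v, L u⟫ := by
    intro u v
    have hs := (Matrix.isHermitian_iff_isSymmetric.1 hI.1) u v
    rw [hL]
    rw [← hs, real_inner_comm]
  have hnn : ∀ v : EuclideanSpace ℝ (Fin m), 0 ≤ ⟪v, L v⟫ := by
    intro v
    have := hI.posSemidef.dotProduct_mulVec_nonneg ((WithLp.equiv 2 _) v)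
    simpa [hL, Matrix.toEuclideanLin_apply, PiLp.inner_apply, dotProduct,
      mul_comm] using this
  set d : EuclideanSpace ℝ (Fin m) := α - xs with hd
  set w : EuclideanSpace ℝ (Fin m) := xs - a with hw
  -- key first-order inequality: f α - f xs ≤ ⟪d, L w⟫
  have key : f α - f xs ≤ ⟪d, L w⟫ := by
    have step : ∀ t : ℝ, 0 < t → t ≤ 1 → f α - f xs ≤ ⟪d, L w⟫ + t / 2 * ⟪d, L d⟫ := by
      intro t ht ht1
      have hcv := hconc.2 (Set.mem_univ xs) (Set.mem_univ α)
        (by linarith : (0:ℝ) ≤ 1 - t) ht.le (by ring)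
      have hpt : (1 - t) • xs + t • α = xs + t • d := by
        rw [hd, smul_sub, sub_smul, one_smul]; abel
      rw [hpt] at hcv
      have hmax := hxs (xs + t • d)
      have hexp : (xs + t • d) - a = w + t • d := by rw [hw]; abel
      rw [hexp] at hmax
      have hq : ⟪w + t • d, L (w + t • d)⟫
          = ⟪w, L w⟫ + 2 * t * ⟪d, L w⟫ + t ^ 2 * ⟪d, L d⟫ := by
        simp only [map_add, LinearMap.map_smul, inner_add_left, inner_add_right,
          real_inner_smul_left, real_inner_smul_right]
        rw [hsym w d]
        ring
      rw [hq] at hmax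
      simp only [smul_eq_mul] at hcv
      nlinarith [hcv, hmax]
    rcases le_or_gt ⟪d, L d⟫ 0 with hD | hD
    · have := step 1 one_pos le_rfl
      nlinarith
    · refine le_of_forall_pos_le_add ?_
      intro ε hε
      set t : ℝ := min 1 (ε / ⟪d, L d⟫) with htdef
      have ht0 : 0 < t := lt_min one_pos (div_pos hε hD)
      have ht1 : t ≤ 1 := min_le_left _ _
      have h2 : t / 2 * ⟪d, L d⟫ ≤ ε := by
        have : t ≤ ε / ⟪d, L d⟫ := min_le_right _ _
        have h3 : t * ⟪d, L d⟫ ≤ ε := by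
          calc t * ⟪d, L d⟫ ≤ (ε / ⟪d, L d⟫) * ⟪d, L d⟫ := by
                exact mul_le_mul_of_nonneg_right this hD.le
            _ = ε := div_mul_cancel₀ ε hD.ne'
        nlinarith
      have := step t ht0 ht1
      linarith
  -- algebra: a - α = -(w + d), xs - α = -d
  have h1 : a - α = -(w + d) := by rw [hw, hd]; abel
  have h2 : xs - α = -d := by rw [hd]; abel
  rw [h1, h2]
  have hq1 : ⟪-d, L (-d)⟫ = ⟪d, L d⟫ := by
    rw [map_neg, inner_neg_neg]
  have hq2 : ⟪-(w + d), L (-(w + d))⟫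
      = ⟪w, L w⟫ + 2 * ⟪d, L w⟫ + ⟪d, L d⟫ := by
    rw [map_neg, inner_neg_neg]
    simp only [map_add, inner_add_left, inner_add_right]
    rw [hsym w d]
    ring
  rw [hq1, hq2]
  have := hnn w
  linarith [key]
end

section
/- Stability of the Bellman update map (Theorem 1, Part 3): Let m ≥ 1, let I be a symmetric positive definite m×m real matrix, and let f : ℝᵐ → ℝ be twice continuously differentiable and concave on ℝᵐ. Suppose φ : ℝᵐ → ℝᵐ is differentiable and satisfies the first-order condition ∇f(φ(p)) = I(φ(p) − p) for every p ∈ ℝᵐ (so φ(p) is the Bellman update with prediction p). Then for every p ∈ ℝᵐ the matrix I − H_f(φ(p)) is invertible, where H_f denotes the Hessian matrix of f, the total derivative of φ at p equals the linear map given by the matrix (I − H_f(φ(p)))⁻¹ I, and every complex eigenvalue of this matrix is real and lies in the interval (0, 1]. If moreover H_f(x) is negative definite for every x ∈ ℝᵐ, then every such eigenvalue lies in (0, 1). -/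
open Matrix RealInnerProductSpace

noncomputable section BellmanAux

variable {m : ℕ}

variable {m : ℕ}

lemma fderiv_eq_inner_gradient (f : EuclideanSpace ℝ (Fin m) → ℝ)
    (z : EuclideanSpace ℝ (Fin m)) (w : EuclideanSpace ℝ (Fin m)) :
    fderiv ℝ f z w = ⟪gradient f z, w⟫ := by
  rw [gradient, InnerProductSpace.toDual_symm_apply]

lemma hess_inner (f : EuclideanSpace ℝ (Fin m) → ℝ) (hdiff : ContDiff ℝ 2 f)
    (A : Matrix (Fin m) (Fin m) ℝ) (x : EuclideanSpace ℝ (Fin m))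
    (hA : HasFDerivAt (gradient f) (Matrix.toEuclideanCLM (𝕜 := ℝ) A) x)
    (v w : EuclideanSpace ℝ (Fin m)) :
    ⟪toEuclideanCLM (𝕜 := ℝ) A v, w⟫ = fderiv ℝ (fderiv ℝ f) x v w := by
  have hfd : DifferentiableAt ℝ (fderiv ℝ f) x :=
    ((hdiff.fderiv_right (m := 1) (by norm_num)).differentiable one_ne_zero x)
  have heq : (fun z => fderiv ℝ f z w) = fun z => (innerSL ℝ w) (gradient f z) := by
    funext z
    rw [fderiv_eq_inner_gradient, innerSL_apply_apply, real_inner_comm]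
  have h1 : HasFDerivAt (fun z => fderiv ℝ f z w)
      ((innerSL ℝ w).comp (Matrix.toEuclideanCLM (𝕜 := ℝ) A)) x := by
    rw [heq]
    exact (innerSL ℝ w).hasFDerivAt.comp x hA
  have h2 : fderiv ℝ (fun z => fderiv ℝ f z w) x =
      (fderiv ℝ (fderiv ℝ f) x).flip w := by
    have := fderiv_clm_apply (c := fderiv ℝ f) (u := fun _ => w) hfd (differentiableAt_const w)
    simpa using this
  have h3 := h1.fderiv
  rw [h2] at h3
  have := congrFun (congrArg DFunLike.coe h3) v
  rw [real_inner_comm]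
  simpa using this.symm

lemma inner_toCLM (A : Matrix (Fin m) (Fin m) ℝ) (x y : Fin m → ℝ) :
    ⟪(WithLp.equiv 2 _).symm x, toEuclideanCLM (𝕜 := ℝ) A ((WithLp.equiv 2 _).symm y)⟫ =
      x ⬝ᵥ A *ᵥ y := by
  simp only [WithLp.equiv_symm_apply, toEuclideanCLM_toLp, EuclideanSpace.inner_toLp_toLp]
  simp [dotProduct_comm]

lemma deriv_nonpos_of_antitone {g : ℝ → ℝ} {d t₀ : ℝ} (hg : Antitone g)
    (hd : HasDerivAt g d t₀) : d ≤ 0 := by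
  have htend : Filter.Tendsto (slope g t₀) (nhdsWithin t₀ (Set.Ioi t₀)) (nhds d) := by
    refine (hasDerivAt_iff_tendsto_slope.mp hd).mono_left (nhdsWithin_mono _ ?_)
    intro t ht
    exact ne_of_gt ht
  refine le_of_tendsto htend ?_
  filter_upwards [self_mem_nhdsWithin] with t ht
  rw [slope_def_field, div_eq_inv_mul]
  have h1 : g t - g t₀ ≤ 0 := sub_nonpos.mpr (hg (le_of_lt ht))
  have h2 : (0:ℝ) ≤ (t - t₀)⁻¹ := inv_nonneg.mpr (sub_nonneg.mpr (le_of_lt ht))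
  exact mul_nonpos_iff.mpr (Or.inl ⟨h2, h1⟩)

lemma hess_neg_semidef (f : EuclideanSpace ℝ (Fin m) → ℝ) (hdiff : ContDiff ℝ 2 f)
    (hconc : ConcaveOn ℝ Set.univ f)
    (A : Matrix (Fin m) (Fin m) ℝ) (x : EuclideanSpace ℝ (Fin m))
    (hA : HasFDerivAt (gradient f) (Matrix.toEuclideanCLM (𝕜 := ℝ) A) x) :
    (-A).PosSemidef := by
  have hsymm : IsSymmSndFDerivAt ℝ f x :=
    hdiff.contDiffAt.isSymmSndFDerivAt (by norm_num)
  have hsym : ∀ v w : EuclideanSpace ℝ (Fin m),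
      ⟪toEuclideanCLM (𝕜 := ℝ) A v, w⟫ = ⟪v, toEuclideanCLM (𝕜 := ℝ) A w⟫ := by
    intro v w
    rw [hess_inner f hdiff A x hA v w, hsymm v w, ← hess_inner f hdiff A x hA w v,
      real_inner_comm]
  have hherm : A.IsHermitian := by
    rw [Matrix.isHermitian_iff_isSymmetric]
    intro v w
    have := hsym v w
    rwa [← Matrix.coe_toEuclideanCLM_eq_toEuclideanLin] at *
  -- nonpositivity
  have hnonpos : ∀ v : EuclideanSpace ℝ (Fin m), ⟪v, toEuclideanCLM (𝕜 := ℝ) A v⟫ ≤ 0 := by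
    intro v
    set c : ℝ → EuclideanSpace ℝ (Fin m) := fun t => x + t • v with hc
    have hcd : ∀ t : ℝ, HasDerivAt c v t := by
      intro t
      have : HasDerivAt (fun t : ℝ => t • v) ((1:ℝ) • v) t := (hasDerivAt_id t).smul_const v
      simpa [hc] using this.const_add x
    have hcongr : ∀ t : ℝ, c 0 = x := by intro t; simp [hc]
    have hh : ConcaveOn ℝ Set.univ (fun t : ℝ => f (c t)) := by
      have := hconc.comp_affineMap (AffineMap.lineMap x (x + v))
      have heq : (f ∘ (AffineMap.lineMap x (x + v) : ℝ →ᵃ[ℝ] EuclideanSpace ℝ (Fin m)))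
          = fun t : ℝ => f (c t) := by
        funext t
        simp [AffineMap.lineMap_apply, hc, add_comm]
      rw [heq] at this
      simpa using this
    have hhd : ∀ t : ℝ, HasDerivAt (fun t => f (c t)) (fderiv ℝ f (c t) v) t := by
      intro t
      exact ((hdiff.differentiable (by norm_num) (c t)).hasFDerivAt).comp_hasDerivAt t (hcd t)
    have hant : Antitone (fun t : ℝ => fderiv ℝ f (c t) v) := by
      have := hh.antitoneOn_deriv (fun t _ => (hhd t).differentiableAt)
      intro s t hst
      have h2 := this (Set.mem_univ s) (Set.mem_univ t) hst
      rwa [(hhd s).deriv, (hhd t).deriv] at h2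
    have hgder : HasDerivAt (fun t : ℝ => fderiv ℝ f (c t) v)
        ⟪v, toEuclideanCLM (𝕜 := ℝ) A v⟫ 0 := by
      have hA0 : HasFDerivAt (gradient f) (Matrix.toEuclideanCLM (𝕜 := ℝ) A) (c 0) := by
        rwa [hcongr 0]
      have hcomp : HasDerivAt (fun t => gradient f (c t)) (toEuclideanCLM (𝕜 := ℝ) A v) 0 :=
        hA0.comp_hasDerivAt 0 (hcd 0)
      have := ((innerSL ℝ v).hasFDerivAt.comp_hasDerivAt 0 hcomp)
      have heq : (⇑(innerSL ℝ v) ∘ fun t => gradient f (c t))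
          = fun t : ℝ => fderiv ℝ f (c t) v := by
        funext t
        simp only [Function.comp_apply, innerSL_apply_apply]
        rw [fderiv_eq_inner_gradient, real_inner_comm]
      rw [heq] at this
      simpa using this
    exact deriv_nonpos_of_antitone hant hgder
  refine PosSemidef.of_dotProduct_mulVec_nonneg hherm.neg ?_
  intro y
  have := hnonpos ((WithLp.equiv 2 _).symm y)
  rw [inner_toCLM A y y] at this
  simp only [star_trivial, neg_mulVec, dotProduct_neg]
  linarith

lemma map_mulVec_ofReal (A : Matrix (Fin m) (Fin m) ℝ) (x : Fin m → ℝ) :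
    (A.map (Complex.ofReal ·)) *ᵥ (fun i => ((x i : ℂ))) = fun i => (((A *ᵥ x) i : ℝ) : ℂ) := by
  funext i
  have := RingHom.map_mulVec Complex.ofRealHom A x i
  exact this.symm

lemma dot_ofReal (x y : Fin m → ℝ) :
    (fun i => ((x i : ℂ))) ⬝ᵥ (fun i => ((y i : ℂ))) = ((x ⬝ᵥ y : ℝ) : ℂ) := by
  have := RingHom.map_dotProduct Complex.ofRealHom x y
  simpa [Function.comp_def] using this.symm

lemma quad_map (A : Matrix (Fin m) (Fin m) ℝ) (hA : A.IsHermitian) (v : Fin m → ℂ) :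
    star v ⬝ᵥ (A.map (Complex.ofReal ·)) *ᵥ v
      = (((fun i => (v i).re) ⬝ᵥ A *ᵥ (fun i => (v i).re)
          + (fun i => (v i).im) ⬝ᵥ A *ᵥ (fun i => (v i).im) : ℝ) : ℂ) := by
  set u : Fin m → ℝ := fun i => (v i).re with hu
  set w : Fin m → ℝ := fun i => (v i).im with hw
  set vr : Fin m → ℂ := fun i => ((u i : ℂ)) with hvr
  set vi : Fin m → ℂ := fun i => ((w i : ℂ)) with hvi
  set Ac := A.map (Complex.ofReal ·) with hAc
  have hv : v = vr + Complex.I • vi := by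
    funext i
    simp [vr, vi, u, w, Complex.ext_iff]
  have hstar : star v = vr - Complex.I • vi := by
    rw [hv]
    funext i
    simp [vr, vi, Complex.ext_iff]
  have hAT : Aᵀ = A := by
    ext i j
    simpa using hA.apply i j
  have hAcsymm : Acᵀ = Ac := by
    rw [hAc, ← transpose_map, hAT]
  have hcross : vr ⬝ᵥ Ac *ᵥ vi = vi ⬝ᵥ Ac *ᵥ vr := by
    rw [dotProduct_mulVec]
    nth_rewrite 1 [← hAcsymm]
    rw [vecMul_transpose, dotProduct_comm]
  rw [hstar, hv]
  rw [mulVec_add, mulVec_smul, sub_dotProduct, dotProduct_add, dotProduct_add,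
    smul_dotProduct, dotProduct_smul, dotProduct_smul, smul_dotProduct]
  rw [map_mulVec_ofReal A u, map_mulVec_ofReal A w]
  have h1 : vr ⬝ᵥ (fun i => (((A *ᵥ u) i : ℝ) : ℂ)) = ((u ⬝ᵥ A *ᵥ u : ℝ) : ℂ) := dot_ofReal u (A *ᵥ u)
  have h2 : vi ⬝ᵥ (fun i => (((A *ᵥ w) i : ℝ) : ℂ)) = ((w ⬝ᵥ A *ᵥ w : ℝ) : ℂ) := dot_ofReal w (A *ᵥ w)
  have h3' : vr ⬝ᵥ (fun i => (((A *ᵥ w) i : ℝ) : ℂ)) = vi ⬝ᵥ (fun i => (((A *ᵥ u) i : ℝ) : ℂ)) := by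
    have := hcross
    rwa [map_mulVec_ofReal A w, map_mulVec_ofReal A u] at this
  rw [h1, h2, h3']
  rw [smul_smul, Complex.I_mul_I, neg_one_smul]
  push_cast
  ring

lemma eig_interval (I B : Matrix (Fin m) (Fin m) ℝ) (hI : I.PosDef) (hB : B.PosSemidef)
    (μ : ℂ) (hμ : μ ∈ spectrum ℂ (((I + B)⁻¹ * I).map (Complex.ofReal ·))) :
    μ.im = 0 ∧ 0 < μ.re ∧ μ.re ≤ 1 ∧ (B.PosDef → μ.re < 1) := by
  set N := I + B with hNdef
  have hN : N.PosDef := hI.add_posSemidef hB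
  have hdet : IsUnit N.det := hN.det_pos.ne'.isUnit
  set Mc := ((N⁻¹ * I).map (Complex.ofReal ·)) with hMc
  rw [← AlgEquiv.spectrum_eq (Matrix.toLinAlgEquiv' :
    Matrix (Fin m) (Fin m) ℂ ≃ₐ[ℂ] _)] at hμ
  have hev := Module.End.HasEigenvalue.of_mem_spectrum hμ
  obtain ⟨v, hv⟩ := hev.exists_hasEigenvector
  have hv0 : v ≠ 0 := hv.2
  have hveq : Mc *ᵥ v = μ • v := by
    have := hv.apply_eq_smul
    rwa [Matrix.toLinAlgEquiv'_apply] at this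
  have hNc : (N.map (Complex.ofReal ·)) * Mc = I.map (Complex.ofReal ·) := by
    rw [hMc]
    have : (fun x : ℝ => (x : ℂ)) = ⇑Complex.ofRealHom := rfl
    rw [this, ← Matrix.map_mul, ← Matrix.mul_assoc, Matrix.mul_nonsing_inv _ hdet,
      Matrix.one_mul]
  have hIv : (I.map (Complex.ofReal ·)) *ᵥ v = μ • ((N.map (Complex.ofReal ·)) *ᵥ v) := by
    rw [← hNc, ← mulVec_mulVec, hveq, mulVec_smul]
  set u : Fin m → ℝ := fun i => (v i).re with hu
  set w : Fin m → ℝ := fun i => (v i).im with hw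
  have huw : u ≠ 0 ∨ w ≠ 0 := by
    by_contra h
    push_neg at h
    apply hv0
    funext i
    have h1 : u i = 0 := by rw [h.1]; rfl
    have h2 : w i = 0 := by rw [h.2]; rfl
    exact Complex.ext h1 h2
  set a' : ℝ := u ⬝ᵥ I *ᵥ u + w ⬝ᵥ I *ᵥ w with ha'
  set b' : ℝ := u ⬝ᵥ N *ᵥ u + w ⬝ᵥ N *ᵥ w with hb'
  set c' : ℝ := u ⬝ᵥ B *ᵥ u + w ⬝ᵥ B *ᵥ w with hc'
  have hbac : b' = a' + c' := by
    rw [ha', hb', hc', hNdef]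
    simp [add_mulVec, dotProduct_add]
    ring
  have hIu : ∀ y : Fin m → ℝ, 0 ≤ y ⬝ᵥ I *ᵥ y := fun y => by
    simpa using hI.posSemidef.dotProduct_mulVec_nonneg y
  have hBu : ∀ y : Fin m → ℝ, 0 ≤ y ⬝ᵥ B *ᵥ y := fun y => by
    simpa using hB.dotProduct_mulVec_nonneg y
  have ha : 0 < a' := by
    rcases huw with h | h
    · have := hI.dotProduct_mulVec_pos h
      simp only [star_trivial] at this
      have h2 := hIu w
      rw [ha']; linarith
    · have := hI.dotProduct_mulVec_pos h
      simp only [star_trivial] at this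
      have h2 := hIu u
      rw [ha']; linarith
  have hc : 0 ≤ c' := add_nonneg (hBu u) (hBu w)
  have hb : 0 < b' := by rw [hbac]; linarith
  have heqq : (a' : ℂ) = μ * (b' : ℂ) := by
    have qI := quad_map I hI.1 v
    have qN := quad_map N hN.1 v
    rw [← qI, ← qN, hIv, dotProduct_smul, smul_eq_mul]
  have hb0 : (b' : ℂ) ≠ 0 := by exact_mod_cast hb.ne'
  have hμval : μ = ((a' / b' : ℝ) : ℂ) := by
    rw [Complex.ofReal_div, eq_div_iff hb0]
    exact heqq.symm
  constructor
  · rw [hμval, Complex.ofReal_im]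
  refine ⟨?_, ?_, ?_⟩
  · rw [hμval, Complex.ofReal_re]; exact div_pos ha hb
  · rw [hμval, Complex.ofReal_re]
    rw [div_le_one hb, hbac]; linarith
  · intro hBpos
    have hcpos : 0 < c' := by
      rcases huw with h | h
      · have := hBpos.dotProduct_mulVec_pos h
        simp only [star_trivial] at this
        have h2 := hBu w
        rw [hc']; linarith
      · have := hBpos.dotProduct_mulVec_pos h
        simp only [star_trivial] at this
        have h2 := hBu u
        rw [hc']; linarith
    rw [hμval, Complex.ofReal_re, div_lt_one hb, hbac]; linarith

end BellmanAux

/-- **Stability of the Bellman update map** (Theorem 1, Part 3): for `f` twice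
continuously differentiable and concave with Hessian matrix `Hf`, if
`φ p` is the Bellman update with prediction `p` (first-order condition
`∇f(φ p) = I (φ p - p)`), then `I - Hf (φ p)` is invertible, the derivative of `φ`
at `p` is given by the matrix `(I - Hf (φ p))⁻¹ I`, and every complex eigenvalue of
this matrix is real and lies in `(0, 1]` — in `(0, 1)` if `Hf` is everywhere
negative definite. -/
theorem bellman_update_stability
    (m : ℕ) (hm : 1 ≤ m)
    (I : Matrix (Fin m) (Fin m) ℝ) (hI : I.PosDef)
    (f : EuclideanSpace ℝ (Fin m) → ℝ)
    (hdiff : ContDiff ℝ 2 f) (hconc : ConcaveOn ℝ Set.univ f)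
    (Hf : EuclideanSpace ℝ (Fin m) → Matrix (Fin m) (Fin m) ℝ)
    (hHf : ∀ x : EuclideanSpace ℝ (Fin m),
      HasFDerivAt (gradient f) (Matrix.toEuclideanCLM (𝕜 := ℝ) (Hf x)) x)
    (φ : EuclideanSpace ℝ (Fin m) → EuclideanSpace ℝ (Fin m))
    (hφdiff : Differentiable ℝ φ)
    (hφ : ∀ p : EuclideanSpace ℝ (Fin m),
      gradient f (φ p) = Matrix.toEuclideanLin I (φ p - p)) :
    ∀ p : EuclideanSpace ℝ (Fin m),
      IsUnit (I - Hf (φ p)) ∧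
      fderiv ℝ φ p = Matrix.toEuclideanCLM (𝕜 := ℝ) ((I - Hf (φ p))⁻¹ * I) ∧
      (∀ μ ∈ spectrum ℂ (((I - Hf (φ p))⁻¹ * I).map (Complex.ofReal ·)),
        μ.im = 0 ∧ 0 < μ.re ∧ μ.re ≤ 1) ∧
      ((∀ x : EuclideanSpace ℝ (Fin m), (-(Hf x)).PosDef) →
        ∀ μ ∈ spectrum ℂ (((I - Hf (φ p))⁻¹ * I).map (Complex.ofReal ·)),
          μ.im = 0 ∧ 0 < μ.re ∧ μ.re < 1) := by
  intro p
  have hsemi : (-(Hf (φ p))).PosSemidef :=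
    hess_neg_semidef f hdiff hconc (Hf (φ p)) (φ p) (hHf (φ p))
  have hNeq : I - Hf (φ p) = I + (-(Hf (φ p))) := sub_eq_add_neg _ _
  have hN : (I - Hf (φ p)).PosDef := by rw [hNeq]; exact hI.add_posSemidef hsemi
  have hdet : IsUnit (I - Hf (φ p)).det := hN.det_pos.ne'.isUnit
  refine ⟨hN.isUnit, ?_, ?_, ?_⟩
  · -- derivative of φ
    have hDφ := (hφdiff p).hasFDerivAt
    have hleft : HasFDerivAt (fun q => gradient f (φ q))
        ((Matrix.toEuclideanCLM (𝕜 := ℝ) (Hf (φ p))).comp (fderiv ℝ φ p)) p :=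
      (hHf (φ p)).comp p hDφ
    have hCLMlin : ∀ (A : Matrix (Fin m) (Fin m) ℝ) (y : EuclideanSpace ℝ (Fin m)),
        Matrix.toEuclideanCLM (𝕜 := ℝ) A y = Matrix.toEuclideanLin A y := by
      intro A y
      rw [← Matrix.coe_toEuclideanCLM_eq_toEuclideanLin]
      rfl
    have hright : HasFDerivAt (fun q => gradient f (φ q))
        ((Matrix.toEuclideanCLM (𝕜 := ℝ) I).comp
          ((fderiv ℝ φ p) - ContinuousLinearMap.id ℝ _)) p := by
      have h1 : HasFDerivAt (fun q : EuclideanSpace ℝ (Fin m) => φ q - q)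
          ((fderiv ℝ φ p) - ContinuousLinearMap.id ℝ _) p := hDφ.sub (hasFDerivAt_id p)
      have h2 := (Matrix.toEuclideanCLM (𝕜 := ℝ) I).hasFDerivAt.comp p h1
      have heq : (⇑(Matrix.toEuclideanCLM (𝕜 := ℝ) I) ∘ fun q => φ q - q)
          = fun q => gradient f (φ q) := by
        funext q
        simp only [Function.comp_apply]
        rw [hφ q, hCLMlin]
      rwa [heq] at h2
    have hkey := hleft.unique hright
    have hcompN : (Matrix.toEuclideanCLM (𝕜 := ℝ) (I - Hf (φ p))).comp (fderiv ℝ φ p)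
        = Matrix.toEuclideanCLM (𝕜 := ℝ) I := by
      rw [map_sub, ContinuousLinearMap.sub_comp, hkey, ContinuousLinearMap.comp_sub,
        ContinuousLinearMap.comp_id]
      exact sub_sub_cancel _ _
    have h3 := congrArg ((Matrix.toEuclideanCLM (𝕜 := ℝ) (I - Hf (φ p))⁻¹).comp) hcompN
    rw [← ContinuousLinearMap.comp_assoc] at h3
    have h4 : (Matrix.toEuclideanCLM (𝕜 := ℝ) (I - Hf (φ p))⁻¹).comp
        (Matrix.toEuclideanCLM (𝕜 := ℝ) (I - Hf (φ p))) = ContinuousLinearMap.id ℝ _ := by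
      rw [← ContinuousLinearMap.mul_def, ← _root_.map_mul, Matrix.nonsing_inv_mul _ hdet, _root_.map_one]
      rfl
    rw [h4, ContinuousLinearMap.id_comp, ← ContinuousLinearMap.mul_def, ← _root_.map_mul] at h3
    exact h3
  · intro μ hμ
    rw [hNeq] at hμ
    have h := eig_interval I (-(Hf (φ p))) hI hsemi μ hμ
    exact ⟨h.1, h.2.1, h.2.2.1⟩
  · intro hneg μ hμ
    rw [hNeq] at hμ
    have h := eig_interval I (-(Hf (φ p))) hI hsemi μ hμ
    exact ⟨h.1, h.2.1, h.2.2.2 (hneg (φ p))⟩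
end

section
/- Deterministic contraction inequality under strong concavity (key step in Theorem 1, Part 4): Let m ≥ 1, let I be a symmetric positive definite m×m real matrix, let a, α ∈ ℝᵐ, let ε > 0, and let f : ℝᵐ → ℝ be continuously differentiable and strongly concave with parameter ε (i.e. x ↦ f(x) + (ε/2)‖x‖² is concave). Let x* be the (unique) maximizer of V(x) = f(x) − (1/2)(x−a)ᵀI(x−a) over ℝᵐ. Then (x* − α)ᵀI(x* − α) + 2ε‖x* − α‖² ≤ (a − α)ᵀI(a − α) + 2⟨a − α, ∇f(α)⟩ + ∇f(α)ᵀ I⁻¹ ∇f(α). -/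
open Matrix RealInnerProductSpace

/-- gradient inequality for concave functions -/
lemma concave_grad_ineq {E : Type*} [NormedAddCommGroup E] [InnerProductSpace ℝ E]
    [CompleteSpace E] {h : E → ℝ} (hc : ConcaveOn ℝ Set.univ h)
    {x y gx : E} (hgx : HasFDerivAt h (InnerProductSpace.toDual ℝ E gx) x) :
    h y ≤ h x + ⟪gx, y - x⟫ := by
  have hline : HasDerivAt (fun t : ℝ => t • (y - x) + x) (y - x) 0 := by
    simpa using ((hasDerivAt_id (0 : ℝ)).smul_const (y - x)).add_const x
  have h0 : (0 : ℝ) • (y - x) + x = x := by simp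
  have hgx' : HasFDerivAt h (InnerProductSpace.toDual ℝ E gx) ((0 : ℝ) • (y - x) + x) := by
    rw [h0]; exact hgx
  have hφ : HasDerivAt (fun t : ℝ => h (t • (y - x) + x)) ⟪gx, y - x⟫ 0 := by
    simpa [InnerProductSpace.toDual_apply_apply, Function.comp_def] using hgx'.comp_hasDerivAt 0 hline
  have hconcφ : ConcaveOn ℝ Set.univ (fun t : ℝ => h (t • (y - x) + x)) := by
    have := hc.comp_affineMap (AffineMap.lineMap x y)
    simpa [Function.comp_def, AffineMap.lineMap_apply, vsub_eq_sub, vadd_eq_add] using this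
  have hcv : ConvexOn ℝ Set.univ (fun t : ℝ => -(h (t • (y - x) + x))) := hconcφ.neg
  have hslope := hcv.le_slope_of_hasDerivAt (Set.mem_univ (0:ℝ)) (Set.mem_univ 1) one_pos hφ.neg
  rw [slope_def_field] at hslope
  have h1 : (1 : ℝ) • (y - x) + x = y := by simp
  rw [h0, h1] at hslope
  have := hslope
  simp only [sub_zero, div_one] at this
  linarith


/-- **Deterministic contraction inequality under strong concavity** (key step in
Theorem 1, Part 4): if `f` is continuously differentiable and strongly concave with
parameter `ε` and `xs` maximizes `V x = f x - (1/2)(x-a)ᵀ I (x-a)`, then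
`(xs-α)ᵀ I (xs-α) + 2ε‖xs-α‖² ≤ (a-α)ᵀ I (a-α) + 2⟨a-α, ∇f(α)⟩ + ∇f(α)ᵀ I⁻¹ ∇f(α)`. -/
theorem bellman_deterministic_contraction
    (m : ℕ) (hm : 1 ≤ m)
    (I : Matrix (Fin m) (Fin m) ℝ) (hI : I.PosDef)
    (a α : EuclideanSpace ℝ (Fin m))
    (ε : ℝ) (hε : 0 < ε)
    (f : EuclideanSpace ℝ (Fin m) → ℝ)
    (hdiff : ContDiff ℝ 1 f)
    (hconc : ConcaveOn ℝ Set.univ (fun x => f x + (ε / 2) * ‖x‖ ^ 2))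
    (xs : EuclideanSpace ℝ (Fin m))
    (hxs : ∀ x : EuclideanSpace ℝ (Fin m),
      f x - (1/2) * ⟪x - a, Matrix.toEuclideanLin I (x - a)⟫
        ≤ f xs - (1/2) * ⟪xs - a, Matrix.toEuclideanLin I (xs - a)⟫) :
    ⟪xs - α, Matrix.toEuclideanLin I (xs - α)⟫ + 2 * ε * ‖xs - α‖ ^ 2
      ≤ ⟪a - α, Matrix.toEuclideanLin I (a - α)⟫
        + 2 * ⟪a - α, gradient f α⟫
        + ⟪gradient f α, Matrix.toEuclideanLin I⁻¹ (gradient f α)⟫ := by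
  let E := EuclideanSpace ℝ (Fin m)
  set T : E →ₗ[ℝ] E := Matrix.toEuclideanLin I with hT
  set S : E →ₗ[ℝ] E := Matrix.toEuclideanLin I⁻¹ with hS
  set g : E → E := gradient f with hg
  -- symmetry
  have hsymT : ∀ u v : E, ⟪T u, v⟫ = ⟪u, T v⟫ :=
    fun u v => Matrix.isHermitian_iff_isSymmetric.mp hI.isHermitian u v
  have hIinv : (I⁻¹).PosDef := hI.inv
  have hsymS : ∀ u v : E, ⟪S u, v⟫ = ⟪u, S v⟫ :=
    fun u v => Matrix.isHermitian_iff_isSymmetric.mp hIinv.isHermitian u v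
  -- inverse relations
  have hdet : IsUnit I.det := isUnit_iff_ne_zero.mpr hI.det_pos.ne'
  have hST : ∀ v : E, S (T v) = v := by
    intro v
    have h1 : I⁻¹ * I = 1 := Matrix.nonsing_inv_mul I hdet
    show (Matrix.toEuclideanLin I⁻¹) ((Matrix.toEuclideanLin I) v) = v
    simp [Matrix.toEuclideanLin_apply, Matrix.mulVec_mulVec, h1]
  have hTS : ∀ v : E, T (S v) = v := by
    intro v
    have h1 : I * I⁻¹ = 1 := Matrix.mul_nonsing_inv I hdet
    show (Matrix.toEuclideanLin I) ((Matrix.toEuclideanLin I⁻¹) v) = v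
    simp [Matrix.toEuclideanLin_apply, Matrix.mulVec_mulVec, h1]
  -- positivity of S
  have hSpos : ∀ v : E, 0 ≤ ⟪v, S v⟫ := by
    intro v
    have hps := hIinv.posSemidef.re_dotProduct_nonneg (star ((WithLp.equiv 2 _) v))
    refine le_trans hps (le_of_eq ?_)
    show _ = @inner ℝ (EuclideanSpace ℝ (Fin m)) _ v ((Matrix.toEuclideanLin I⁻¹) v)
    simp only [Matrix.toEuclideanLin_apply, EuclideanSpace.inner_eq_star_dotProduct]
    simp [dotProduct, Matrix.mulVec, mul_comm]
  -- differentiability of f with gradient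
  have hf : ∀ z : E, HasFDerivAt f (InnerProductSpace.toDual ℝ E (g z)) z := fun z =>
    hasGradientAt_iff_hasFDerivAt.mp ((hdiff.differentiable one_ne_zero).differentiableAt).hasGradientAt
  -- derivative of the quadratic form
  have hq : ∀ x : E, HasFDerivAt (fun y : E => ⟪y - a, T (y - a)⟫)
      (InnerProductSpace.toDual ℝ E (2 • T (x - a))) x := by
    intro x
    have h1 : HasFDerivAt (fun y : E => y - a) (ContinuousLinearMap.id ℝ E) x :=
      (hasFDerivAt_id x).sub_const a
    have Tc : E →L[ℝ] E := LinearMap.toContinuousLinearMap T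
    have h2 : HasFDerivAt (fun y : E => T (y - a))
        ((LinearMap.toContinuousLinearMap T).comp (ContinuousLinearMap.id ℝ E)) x := by
      exact ((LinearMap.toContinuousLinearMap T).hasFDerivAt).comp x h1
    have h3 := h1.inner ℝ h2
    refine h3.congr_fderiv (Eq.symm ?_)
    ext v
    simp only [InnerProductSpace.toDual_apply_apply, ContinuousLinearMap.comp_apply,
      fderivInnerCLM_apply, ContinuousLinearMap.prod_apply, ContinuousLinearMap.coe_id', id_eq,
      LinearMap.coe_toContinuousLinearMap']
    rw [two_smul, inner_add_left, ← hsymT (x - a) v, real_inner_comm v (T (x - a))]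
  -- first-order condition at the max
  have hkey : g xs = T (xs - a) := by
    have hV : HasFDerivAt (fun x : E => f x - (1/2) * ⟪x - a, T (x - a)⟫)
        (InnerProductSpace.toDual ℝ E (g xs)
          - (1/2 : ℝ) • InnerProductSpace.toDual ℝ E (2 • T (xs - a))) xs :=
      (hf xs).sub ((hq xs).const_mul (1/2 : ℝ))
    have hmax : IsLocalMax (fun x : E => f x - (1/2) * ⟪x - a, T (x - a)⟫) xs :=
      Filter.Eventually.of_forall hxs
    have h0 := hmax.hasFDerivAt_eq_zero hV
    have h0' := DFunLike.congr_fun h0 (g xs - T (xs - a))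
    simp only [ContinuousLinearMap.sub_apply, ContinuousLinearMap.smul_apply,
      InnerProductSpace.toDual_apply_apply, ContinuousLinearMap.zero_apply] at h0'
    rw [two_smul, inner_add_left, smul_eq_mul] at h0'
    have : ⟪g xs - T (xs - a), g xs - T (xs - a)⟫ = 0 := by
      rw [inner_sub_left]
      linarith
    have hz := inner_self_eq_zero.mp this
    exact sub_eq_zero.mp hz
  -- gradient of the strongly concave auxiliary function
  have hgrad_h : ∀ z : EuclideanSpace ℝ (Fin m),
      HasFDerivAt (fun x : EuclideanSpace ℝ (Fin m) => f x + (ε / 2) * ‖x‖ ^ 2)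
        (InnerProductSpace.toDual ℝ (EuclideanSpace ℝ (Fin m)) (g z + ε • z)) z := by
    intro z
    have hsq : HasFDerivAt (fun x : EuclideanSpace ℝ (Fin m) => ‖x‖ ^ 2)
        (2 • (innerSL ℝ z)) z := (hasStrictFDerivAt_norm_sq z).hasFDerivAt
    have := (hf z).add (hsq.const_mul (ε / 2))
    refine this.congr_fderiv (Eq.symm ?_)
    ext v
    simp only [InnerProductSpace.toDual_apply_apply, ContinuousLinearMap.add_apply,
      ContinuousLinearMap.smul_apply, ContinuousLinearMap.coe_smul', Pi.smul_apply,
      innerSL_apply_apply, smul_eq_mul, inner_add_left, inner_smul_left, conj_trivial]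
    push_cast
    erw [InnerProductSpace.toDual_apply_apply]
    ring
  -- monotonicity of the gradient from concavity
  have hmono : ⟪g xs - g α, xs - α⟫ ≤ -(ε * ‖xs - α‖ ^ 2) := by
    have A1 := concave_grad_ineq hconc (hgrad_h xs) (y := α)
    have A2 := concave_grad_ineq hconc (hgrad_h α) (y := xs)
    have e1 : ⟪g xs + ε • xs, α - xs⟫
        = -(⟪g xs, xs - α⟫ + ε * ⟪xs, xs - α⟫) := by
      rw [show α - xs = -(xs - α) by abel]
      rw [inner_neg_right, inner_add_left, inner_smul_left]
      simp only [conj_trivial]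
    have e2 : ⟪g α + ε • α, xs - α⟫ = ⟪g α, xs - α⟫ + ε * ⟪α, xs - α⟫ := by
      rw [inner_add_left, inner_smul_left]
      simp only [conj_trivial]
    have e3 : ⟪xs, xs - α⟫ - ⟪α, xs - α⟫ = ‖xs - α‖ ^ 2 := by
      rw [← inner_sub_left, real_inner_self_eq_norm_sq]
    rw [inner_sub_left]
    rw [e1] at A1
    rw [e2] at A2
    nlinarith [A1, A2, e3]
  -- final algebra
  set u : EuclideanSpace ℝ (Fin m) := g xs - g α with hu
  set w : EuclideanSpace ℝ (Fin m) := (a - α) + S (g α) with hw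
  have hSu : S u = (xs - a) - S (g α) := by rw [hu, map_sub, hkey, hST]
  have hd : (xs - α : EuclideanSpace ℝ (Fin m)) = S u + w := by
    rw [hSu, hw]; abel
  have hwd : w = (xs - α) - S u := by rw [hd]; abel
  have E1 : ⟪xs - α, T (xs - α)⟫ = ⟪u, S u⟫ + 2 * ⟪u, w⟫ + ⟪w, T w⟫ := by
    rw [hd, map_add, hTS]
    rw [inner_add_left, inner_add_right, inner_add_right]
    rw [real_inner_comm (S u) u, real_inner_comm w u]
    rw [show ⟪S u, T w⟫ = ⟪u, w⟫ by rw [← hsymT, hTS]]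
    rw [real_inner_comm u w]
    ring
  have E2 : ⟪w, T w⟫ = ⟪a - α, T (a - α)⟫ + 2 * ⟪a - α, g α⟫ + ⟪g α, S (g α)⟫ := by
    rw [hw, map_add, hTS]
    rw [inner_add_left, inner_add_right, inner_add_right]
    rw [real_inner_comm (S (g α)) (g α)]
    rw [show ⟪S (g α), T (a - α)⟫ = ⟪g α, a - α⟫ by rw [← hsymT, hTS]]
    rw [real_inner_comm (g α) (a - α)]
    ring
  have E3 : ⟪u, w⟫ = ⟪u, xs - α⟫ - ⟪u, S u⟫ := by
    rw [hwd, inner_sub_right]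
  have hpos := hSpos u
  have hmono' : ⟪u, xs - α⟫ ≤ -(ε * ‖xs - α‖ ^ 2) := hmono
  linarith [E1, E2, E3, hpos, hmono']
end

section
/- Almost-sure contraction under the Toulis–Airoldi notion of strong concavity (Appendix L): Let m ≥ 1, let I be a symmetric positive definite m×m real matrix, let a, α ∈ ℝᵐ, let ε > 0, and let f : ℝᵐ → ℝ be continuously differentiable and satisfy ⟨x − α, ∇f(x)⟩ ≤ −ε‖x − α‖² for every x ∈ ℝᵐ. If x* ∈ ℝᵐ satisfies the first-order condition I(x* − a) = ∇f(x*), then (x* − α)ᵀI(x* − α) + 2ε‖x* − α‖² ≤ (a − α)ᵀI(a − α). In particular, if I = γ⁻¹·(identity matrix) for some γ > 0, then ‖x* − α‖² ≤ (1 + 2γε)⁻¹ ‖a − α‖². -/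
open Matrix RealInnerProductSpace

/-- **Almost-sure contraction under the Toulis–Airoldi notion of strong concavity**
(Appendix L): if `⟨x - α, ∇f(x)⟩ ≤ -ε‖x - α‖²` for all `x` and `xs` satisfies the
first-order condition `I(xs - a) = ∇f(xs)`, then
`(xs-α)ᵀ I (xs-α) + 2ε‖xs-α‖² ≤ (a-α)ᵀ I (a-α)`; in particular, for
`I = γ⁻¹ · Id`, `‖xs-α‖² ≤ (1+2γε)⁻¹ ‖a-α‖²`. -/
theorem toulis_airoldi_contraction
    (m : ℕ) (hm : 1 ≤ m)
    (I : Matrix (Fin m) (Fin m) ℝ) (hI : I.PosDef)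
    (a α : EuclideanSpace ℝ (Fin m))
    (ε : ℝ) (hε : 0 < ε)
    (f : EuclideanSpace ℝ (Fin m) → ℝ)
    (hdiff : ContDiff ℝ 1 f)
    (hsc : ∀ x : EuclideanSpace ℝ (Fin m),
      ⟪x - α, gradient f x⟫ ≤ -ε * ‖x - α‖ ^ 2)
    (xs : EuclideanSpace ℝ (Fin m))
    (hfoc : Matrix.toEuclideanLin I (xs - a) = gradient f xs) :
    (⟪xs - α, Matrix.toEuclideanLin I (xs - α)⟫ + 2 * ε * ‖xs - α‖ ^ 2
      ≤ ⟪a - α, Matrix.toEuclideanLin I (a - α)⟫) ∧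
    (∀ γ : ℝ, 0 < γ → I = γ⁻¹ • (1 : Matrix (Fin m) (Fin m) ℝ) →
      ‖xs - α‖ ^ 2 ≤ (1 + 2 * γ * ε)⁻¹ * ‖a - α‖ ^ 2) := by
  set T := Matrix.toEuclideanLin I with hT
  set u := xs - α with hu
  set v := a - α with hv
  have hsym : ∀ x y : EuclideanSpace ℝ (Fin m), ⟪T x, y⟫ = ⟪x, T y⟫ :=
    Matrix.isHermitian_iff_isSymmetric.1 hI.1
  have hpos : 0 ≤ ⟪v - u, T (v - u)⟫ := by
    have := hI.posSemidef.re_dotProduct_nonneg ((v - u : EuclideanSpace ℝ (Fin m)) : Fin m → ℝ)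
    simp only [RCLike.re_to_real, star_trivial] at this
    simpa [hT, Matrix.toEuclideanLin_apply, PiLp.inner_apply, dotProduct, mul_comm] using this
  have hgrad : ⟪u, T (u - v)⟫ ≤ -ε * ‖u‖ ^ 2 := by
    have h1 : xs - a = u - v := by rw [hu, hv]; abel
    have := hsc xs
    rw [← hfoc, h1] at this
    exact this
  have key : ⟪u, T u⟫ + 2 * ε * ‖u‖ ^ 2 ≤ ⟪v, T v⟫ := by
    have e1 : ⟪v, T u⟫ = ⟪u, T v⟫ := by rw [← hsym u v, real_inner_comm]
    rw [map_sub, inner_sub_left, inner_sub_right, inner_sub_right, e1] at hpos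
    rw [map_sub, inner_sub_right] at hgrad
    linarith
  refine ⟨key, ?_⟩
  intro γ hγ hIγ
  have hTg : ∀ w : EuclideanSpace ℝ (Fin m), T w = γ⁻¹ • w := by
    intro w
    simp [hT, hIγ, Matrix.toEuclideanLin_apply, Matrix.smul_mulVec]
  have key2 : γ⁻¹ * ‖u‖ ^ 2 + 2 * ε * ‖u‖ ^ 2 ≤ γ⁻¹ * ‖v‖ ^ 2 := by
    have h1 : ⟪u, T u⟫ = γ⁻¹ * ‖u‖ ^ 2 := by
      rw [hTg, real_inner_smul_right, real_inner_self_eq_norm_sq]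
    have h2 : ⟪v, T v⟫ = γ⁻¹ * ‖v‖ ^ 2 := by
      rw [hTg, real_inner_smul_right, real_inner_self_eq_norm_sq]
    rw [h1, h2] at key
    exact key
  have hpos1 : (0:ℝ) < 1 + 2 * γ * ε := by positivity
  rw [inv_mul_eq_div, le_div_iff₀ hpos1]
  have hc : γ * γ⁻¹ = 1 := mul_inv_cancel₀ hγ.ne'
  nlinarith [mul_le_mul_of_nonneg_left key2 hγ.le]
end

section
/- Closed-form value of the maximization over the previous state in Bellman's equation (Appendix B, completing the square): Let m ≥ 1, let Q and I be symmetric positive definite m×m real matrices, let T be an m×m real matrix, and let c, mvec ∈ ℝᵐ. Then for every x ∈ ℝᵐ, sup over b ∈ ℝᵐ of [ −(1/2)(x − c − Tb)ᵀQ⁻¹(x − c − Tb) − (1/2)(b − mvec)ᵀI(b − mvec) ] equals −(1/2)(x − c − T·mvec)ᵀ (T I⁻¹ Tᵀ + Q)⁻¹ (x − c − T·mvec), i.e. the predicted state is c + T·mvec and the predicted information matrix is (T I⁻¹ Tᵀ + Q)⁻¹. -/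
open Matrix

variable {m : ℕ}

lemma dot_tr (S : Matrix (Fin m) (Fin m) ℝ) (a b : Fin m → ℝ) :
    a ⬝ᵥ (S *ᵥ b) = b ⬝ᵥ (Sᵀ *ᵥ a) := by
  rw [dotProduct_mulVec, dotProduct_comm, ← mulVec_transpose]

lemma dot_symm {S : Matrix (Fin m) (Fin m) ℝ} (hS : Sᵀ = S) (a b : Fin m → ℝ) :
    a ⬝ᵥ (S *ᵥ b) = b ⬝ᵥ (S *ᵥ a) := by
  rw [dot_tr, hS]

lemma dot_transpose (T : Matrix (Fin m) (Fin m) ℝ) (u z : Fin m → ℝ) :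
    u ⬝ᵥ (Tᵀ *ᵥ z) = (T *ᵥ u) ⬝ᵥ z := by
  rw [dotProduct_mulVec, vecMul_transpose]

lemma quad_expand {S : Matrix (Fin m) (Fin m) ℝ} (hS : Sᵀ = S) (a b : Fin m → ℝ) :
    (a - b) ⬝ᵥ (S *ᵥ (a - b))
      = a ⬝ᵥ (S *ᵥ a) - 2 * (a ⬝ᵥ (S *ᵥ b)) + b ⬝ᵥ (S *ᵥ b) := by
  rw [mulVec_sub, dotProduct_sub, sub_dotProduct, sub_dotProduct, dot_symm hS b a]
  ring

/-- **Closed-form value of the maximization over the previous state in Bellman's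
equation** (Appendix B, completing the square): for every `x`,
`sup_b [ -(1/2)(x - c - Tb)ᵀ Q⁻¹ (x - c - Tb) - (1/2)(b - mvec)ᵀ I (b - mvec) ]
  = -(1/2)(x - c - T mvec)ᵀ (T I⁻¹ Tᵀ + Q)⁻¹ (x - c - T mvec)`,
i.e. the predicted state is `c + T mvec` and the predicted information matrix is
`(T I⁻¹ Tᵀ + Q)⁻¹`. -/
theorem bellman_prev_state_sup
    (m : ℕ) (hm : 1 ≤ m)
    (Q I : Matrix (Fin m) (Fin m) ℝ) (hQ : Q.PosDef) (hI : I.PosDef)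
    (T : Matrix (Fin m) (Fin m) ℝ)
    (c mvec : Fin m → ℝ) :
    ∀ x : Fin m → ℝ,
      (⨆ b : Fin m → ℝ,
        (-(1/2) * ((x - c - T.mulVec b) ⬝ᵥ Q⁻¹.mulVec (x - c - T.mulVec b))
          - (1/2) * ((b - mvec) ⬝ᵥ I.mulVec (b - mvec))))
      = -(1/2) * ((x - c - T.mulVec mvec) ⬝ᵥ
          (T * I⁻¹ * Tᵀ + Q)⁻¹.mulVec (x - c - T.mulVec mvec)) := by
  intro x
  have hQi : Q⁻¹.PosDef := hQ.inv
  have hIi : I⁻¹.PosDef := hI.inv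
  set v : Fin m → ℝ := x - c - T *ᵥ mvec with hv
  set M : Matrix (Fin m) (Fin m) ℝ := Tᵀ * Q⁻¹ * T + I with hMdef
  have hTQT : (Tᵀ * Q⁻¹ * T).PosSemidef := by
    have := hQi.posSemidef.conjTranspose_mul_mul_same T
    simpa using this
  have hM : M.PosDef := Matrix.PosDef.posSemidef_add hTQT hI
  have hMMinv : M * M⁻¹ = 1 := Matrix.mul_nonsing_inv M
    (isUnit_iff_ne_zero.mpr hM.det_pos.ne')
  have hQsym : Q⁻¹ᵀ = Q⁻¹ := hQi.isHermitian.eq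
  have hMsym : Mᵀ = M := hM.isHermitian.eq
  set z : Fin m → ℝ := Tᵀ *ᵥ (Q⁻¹ *ᵥ v) with hz
  set w : Fin m → ℝ := M⁻¹ *ᵥ z with hw
  have hMw : M *ᵥ w = z := by
    rw [hw, mulVec_mulVec, hMMinv, one_mulVec]
  set K : ℝ := -(1/2) * (v ⬝ᵥ (Q⁻¹ - Q⁻¹ * T * M⁻¹ * Tᵀ * Q⁻¹) *ᵥ v) with hK
  -- key identity
  have key : ∀ b : Fin m → ℝ,
      (-(1/2) * ((x - c - T.mulVec b) ⬝ᵥ Q⁻¹.mulVec (x - c - T.mulVec b))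
          - (1/2) * ((b - mvec) ⬝ᵥ I.mulVec (b - mvec)))
      = K - (1/2) * ((b - (mvec + w)) ⬝ᵥ M *ᵥ (b - (mvec + w))) := by
    intro b
    have h1 : x - c - T.mulVec b = v - T *ᵥ (b - mvec) := by
      rw [hv, mulVec_sub]; abel
    have h2 : b - (mvec + w) = (b - mvec) - w := by abel
    rw [h1, h2]
    generalize (b - mvec) = u
    have e1 := quad_expand hQsym v (T *ᵥ u)
    have e2 := quad_expand hMsym u w
    have e3 : u ⬝ᵥ M *ᵥ u = (T *ᵥ u) ⬝ᵥ Q⁻¹ *ᵥ (T *ᵥ u) + u ⬝ᵥ I *ᵥ u := by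
      rw [hMdef, add_mulVec, dotProduct_add, Matrix.mul_assoc, ← mulVec_mulVec,
        dot_transpose, mulVec_mulVec]
    have e4 : u ⬝ᵥ M *ᵥ w = v ⬝ᵥ Q⁻¹ *ᵥ (T *ᵥ u) := by
      rw [hMw, hz, dot_transpose, dot_symm hQsym (T *ᵥ u) v]
    have e5 : v ⬝ᵥ (Q⁻¹ - Q⁻¹ * T * M⁻¹ * Tᵀ * Q⁻¹) *ᵥ v
        = v ⬝ᵥ Q⁻¹ *ᵥ v - w ⬝ᵥ M *ᵥ w := by
      rw [sub_mulVec, dotProduct_sub, hMw, hz]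
      congr 1
      simp only [← mulVec_mulVec]
      rw [dot_symm hQsym, dot_transpose]
    rw [e1, e2, hK, e5]
    have e4' : v ⬝ᵥ Q⁻¹ *ᵥ (T *ᵥ u) = u ⬝ᵥ M *ᵥ w := e4.symm
    rw [e4', e3]
    ring
  have hub : ∀ b : Fin m → ℝ,
      (-(1/2) * ((x - c - T.mulVec b) ⬝ᵥ Q⁻¹.mulVec (x - c - T.mulVec b))
          - (1/2) * ((b - mvec) ⬝ᵥ I.mulVec (b - mvec))) ≤ K := by
    intro b
    rw [key b]
    have h0 : 0 ≤ (b - (mvec + w)) ⬝ᵥ M *ᵥ (b - (mvec + w)) := by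
      have := hM.posSemidef.dotProduct_mulVec_nonneg (b - (mvec + w))
      simpa using this
    linarith
  have hsup : (⨆ b : Fin m → ℝ,
      (-(1/2) * ((x - c - T.mulVec b) ⬝ᵥ Q⁻¹.mulVec (x - c - T.mulVec b))
          - (1/2) * ((b - mvec) ⬝ᵥ I.mulVec (b - mvec)))) = K := by
    apply le_antisymm (ciSup_le hub)
    have hb : (-(1/2) * ((x - c - T.mulVec (mvec + w)) ⬝ᵥ Q⁻¹.mulVec (x - c - T.mulVec (mvec + w)))
          - (1/2) * (((mvec + w) - mvec) ⬝ᵥ I.mulVec ((mvec + w) - mvec))) = K := by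
      rw [key (mvec + w)]
      simp
    have hbdd : BddAbove (Set.range fun b : Fin m → ℝ =>
        (-(1/2) * ((x - c - T.mulVec b) ⬝ᵥ Q⁻¹.mulVec (x - c - T.mulVec b))
          - (1/2) * ((b - mvec) ⬝ᵥ I.mulVec (b - mvec)))) := by
      refine ⟨K, ?_⟩
      rintro y ⟨b, rfl⟩
      exact hub b
    exact hb ▸ le_ciSup hbdd (mvec + w)
  rw [hsup, hK]
  -- Woodbury
  congr 2
  have hWood : (Q + T * I⁻¹ * Tᵀ)⁻¹
      = Q⁻¹ - Q⁻¹ * T * (I⁻¹⁻¹ + Tᵀ * Q⁻¹ * T)⁻¹ * Tᵀ * Q⁻¹ := by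
    apply Matrix.add_mul_mul_inv_eq_sub
    · exact (Matrix.isUnit_iff_isUnit_det Q).mpr (isUnit_iff_ne_zero.mpr hQ.det_pos.ne')
    · exact (Matrix.isUnit_iff_isUnit_det I⁻¹).mpr (isUnit_iff_ne_zero.mpr hIi.det_pos.ne')
    · rw [Matrix.nonsing_inv_nonsing_inv I (isUnit_iff_ne_zero.mpr hI.det_pos.ne')]
      rw [add_comm]
      exact (Matrix.isUnit_iff_isUnit_det M).mpr (isUnit_iff_ne_zero.mpr hM.det_pos.ne')
  rw [add_comm (T * I⁻¹ * Tᵀ) Q, hWood,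
    Matrix.nonsing_inv_nonsing_inv I (isUnit_iff_ne_zero.mpr hI.det_pos.ne'),
    add_comm I (Tᵀ * Q⁻¹ * T)]
end
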